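/- Let f*_t satisfy f*_t(S_t,T_t) = E[f*_{t+1}(S_{t+1},τ_{t+1}) | S_t, T_t] and a*_t be the recursive Riesz representers. Then for each t and any square-integrable direction f̃_t, the Gateaux derivative of (f_t) \mapsto E[m(Z; f̄, ā)] in direction f̃_t, evaluated at the true nuisances, equals E[a*_{t-1}(S_{t-1},T_{t-1}) f̃_t(S_t,τ_t) - a*_t(S_t,T_t) f̃_t(S_t,T_t)], and this quantity is zero (Neyman orthogonality with respect to the regressions). -/

import Mathlib

/-!
Perturbing the single regression `f_{t₀}` in direction `f̃` moves the moment `m` affinely in `ε`: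
`f_{t₀}` occurs once evaluated at `(S_{t₀}, τ_{t₀})` with weight `a_{t₀-1}` (with `a_0 = 1` when
`t₀ = 1`) and once at `(S_{t₀}, T_{t₀})` with weight `-a_{t₀}`. Hence the Gateaux derivative is the
expectation of `a_{t₀-1} f̃(S_{t₀}, τ_{t₀}) - a_{t₀} f̃(S_{t₀}, T_{t₀})`, which vanishes because
`a_{t₀}` is the Riesz representer of `g ↦ E[a_{t₀-1} g(S_{t₀}, τ_{t₀})]`.
-/

open MeasureTheory Finset

/-- The moment `m(Z; f̄, ā)` at a fixed sample point, with `a t = a_t(S_t, T_t)`,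
`F t = f_t(S_t, τ_t)` and `G t = f_t(S_t, T_t)`. -/
def dynamicMoment {R : Type*} [CommRing R] (M : ℕ) (a F G : ℕ → R) : R :=
  F 1 + ∑ t ∈ Icc 1 M, a t * (F (t + 1) - G t)

theorem pi_single_diag_eq {ι M : Type*} [DecidableEq ι] [Zero M] (i : ι) (g : ι → M) :
    (fun k => (Pi.single i (g k) : ι → M) k) = Pi.single i (g i) := by
  funext k
  rcases eq_or_ne k i with rfl | hk
  · simp
  · simp [hk]

theorem update_add_mul_apply {ι α β R : Type*} [DecidableEq ι] [Semiring R]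
    (f : ι → α → β → R) (g : α → β → R) (i : ι) (ε : R) (k : ι) (s : α) (u : β) :
    Function.update f i (fun s u => f i s u + ε * g s u) k s u
      = f k s u + ε * (Pi.single i (g s u) : ι → R) k := by
  rcases eq_or_ne k i with rfl | hk
  · simp
  · simp [hk]

section DynamicMoment

variable {R : Type*} [CommRing R] (M : ℕ) (a : ℕ → R)

theorem dynamicMoment_add_mul (F G F' G' : ℕ → R) (ε : R) :
    dynamicMoment M a (fun t => F t + ε * F' t) (fun t => G t + ε * G' t)
      = dynamicMoment M a F G + ε * dynamicMoment M a F' G' := by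
  unfold dynamicMoment
  rw [mul_add, mul_sum, add_add_add_comm, ← sum_add_distrib]
  exact congrArg _ (sum_congr rfl fun t _ => by ring)

theorem dynamicMoment_single (ha : a 0 = 1) {t₀ : ℕ} (ht₀ : t₀ ∈ Icc 1 M) (x y : R) :
    dynamicMoment M a (Pi.single t₀ x) (Pi.single t₀ y) = a (t₀ - 1) * x - a t₀ * y := by
  obtain ⟨k, rfl⟩ : ∃ k, t₀ = k + 1 := ⟨t₀ - 1, by grind⟩
  have hshift : ∀ t, (Pi.single (k + 1) x : ℕ → R) (t + 1) = (Pi.single k x : ℕ → R) t :=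
    fun t => by simp only [Pi.single_apply, Nat.add_right_cancel_iff]
  simp only [dynamicMoment, mul_sub, sum_sub_distrib, hshift, Pi.single_apply, mul_ite, mul_zero,
    sum_ite_eq', if_pos ht₀, Nat.add_sub_cancel]
  -- for `t₀ = 1` the `τ`-term is the leading `F 1`, not a summand, and `a 0 = 1` is its weight
  rcases k with _ | k
  · simp [ha, ← sub_eq_add_neg]
  · rw [if_neg (by omega), if_pos (by grind), zero_add]

theorem dynamicMoment_update_add_mul {α β : Type*} (ha : a 0 = 1) {t₀ : ℕ} (ht₀ : t₀ ∈ Icc 1 M)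
    (f : ℕ → α → β → R) (g : α → β → R) (ε : R) (s : ℕ → α) (u v : ℕ → β) :
    dynamicMoment M a
        (fun t => Function.update f t₀ (fun s u => f t₀ s u + ε * g s u) t (s t) (u t))
        (fun t => Function.update f t₀ (fun s u => f t₀ s u + ε * g s u) t (s t) (v t))
      = dynamicMoment M a (fun t => f t (s t) (u t)) (fun t => f t (s t) (v t))
        + ε * (a (t₀ - 1) * g (s t₀) (u t₀) - a t₀ * g (s t₀) (v t₀)) := by
  simp only [update_add_mul_apply]
  rw [dynamicMoment_add_mul, pi_single_diag_eq, pi_single_diag_eq, dynamicMoment_single M a ha ht₀]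

end DynamicMoment

section Integrals

variable {Ω : Type*} [MeasurableSpace Ω] {μ : Measure Ω}

theorem integrable_dynamicMoment [IsFiniteMeasure μ] (M : ℕ) {a F G : ℕ → Ω → ℝ}
    (ha : ∀ t, MemLp (a t) 2 μ) (hF : ∀ t, MemLp (F t) 2 μ) (hG : ∀ t, MemLp (G t) 2 μ) :
    Integrable (fun ω => dynamicMoment M (a · ω) (F · ω) (G · ω)) μ := by
  have hterm : ∀ t, Integrable (fun ω => a t ω * (F (t + 1) ω - G t ω)) μ := fun t =>
    (((ha t).integrable_mul (hF (t + 1))).sub ((ha t).integrable_mul (hG t))).congr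
      (ae_of_all _ fun ω => (mul_sub _ _ _).symm)
  exact ((hF 1).integrable one_le_two).add (integrable_finsetSum _ fun t _ => hterm t)

theorem hasDerivAt_integral_add_mul {f g : Ω → ℝ} (hf : Integrable f μ) (hg : Integrable g μ)
    (x : ℝ) : HasDerivAt (fun ε => ∫ ω, f ω + ε * g ω ∂μ) (∫ ω, g ω ∂μ) x := by
  have hlin : (fun ε => ∫ ω, f ω + ε * g ω ∂μ) = fun ε => (∫ ω, f ω ∂μ) + ε * ∫ ω, g ω ∂μ := by
    funext ε
    rw [integral_add hf (hg.const_mul ε), integral_const_mul]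
  rw [hlin]
  exact (hasDerivAt_mul_const _).const_add _

end Integrals

theorem dynamic_orthogonality_regressions_general {Ω 𝒮 𝒯 : Type*} [MeasurableSpace Ω]
    (μ : Measure Ω) [IsProbabilityMeasure μ]
    (M : ℕ)
    (S : ℕ → Ω → 𝒮) (T : ℕ → Ω → 𝒯) (τ : ℕ → 𝒯)
    (fstar astar : ℕ → 𝒮 → 𝒯 → ℝ)
    (hastar0 : ∀ s u, astar 0 s u = 1)
    -- the true recursive Riesz representers
    (hriesz : ∀ t ∈ Icc 1 M, ∀ g : 𝒮 → 𝒯 → ℝ,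
      MemLp (fun ω => g (S t ω) (T t ω)) 2 μ →
      MemLp (fun ω => g (S t ω) (τ t)) 2 μ →
      (∫ ω, astar (t - 1) (S (t - 1) ω) (T (t - 1) ω) * g (S t ω) (τ t) ∂μ)
        = ∫ ω, astar t (S t ω) (T t ω) * g (S t ω) (T t ω) ∂μ)
    (hfstarL2 : ∀ t, MemLp (fun ω => fstar t (S t ω) (T t ω)) 2 μ
      ∧ MemLp (fun ω => fstar t (S t ω) (τ t)) 2 μ)
    (hastarL2 : ∀ t, MemLp (fun ω => astar t (S t ω) (T t ω)) 2 μ)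
    (t₀ : ℕ) (ht₀ : t₀ ∈ Icc 1 M)
    (ftil : 𝒮 → 𝒯 → ℝ)
    (hftilL2 : MemLp (fun ω => ftil (S t₀ ω) (T t₀ ω)) 2 μ)
    (hftilτL2 : MemLp (fun ω => ftil (S t₀ ω) (τ t₀)) 2 μ) :
    HasDerivAt
      (fun ε : ℝ =>
        ∫ ω,
          ((Function.update fstar t₀ (fun s u => fstar t₀ s u + ε * ftil s u)) 1 (S 1 ω) (τ 1)
            + ∑ t ∈ Icc 1 M, astar t (S t ω) (T t ω)
                * ((Function.update fstar t₀ (fun s u => fstar t₀ s u + ε * ftil s u))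
                      (t + 1) (S (t + 1) ω) (τ (t + 1))
                   - (Function.update fstar t₀ (fun s u => fstar t₀ s u + ε * ftil s u))
                      t (S t ω) (T t ω))) ∂μ)
      (∫ ω, astar (t₀ - 1) (S (t₀ - 1) ω) (T (t₀ - 1) ω) * ftil (S t₀ ω) (τ t₀)
          - astar t₀ (S t₀ ω) (T t₀ ω) * ftil (S t₀ ω) (T t₀ ω) ∂μ)
      0
    ∧ (∫ ω, astar (t₀ - 1) (S (t₀ - 1) ω) (T (t₀ - 1) ω) * ftil (S t₀ ω) (τ t₀)
          - astar t₀ (S t₀ ω) (T t₀ ω) * ftil (S t₀ ω) (T t₀ ω) ∂μ) = 0 := by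
  have hprev : Integrable (fun ω =>
      astar (t₀ - 1) (S (t₀ - 1) ω) (T (t₀ - 1) ω) * ftil (S t₀ ω) (τ t₀)) μ :=
    (hastarL2 (t₀ - 1)).integrable_mul hftilτL2
  have hcur : Integrable (fun ω => astar t₀ (S t₀ ω) (T t₀ ω) * ftil (S t₀ ω) (T t₀ ω)) μ :=
    (hastarL2 t₀).integrable_mul hftilL2
  refine ⟨?_, by rw [integral_sub hprev hcur, hriesz t₀ ht₀ ftil hftilL2 hftilτL2, sub_self]⟩
  have hbase := integrable_dynamicMoment (μ := μ) M hastarL2 (fun t => (hfstarL2 t).2)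
    (fun t => (hfstarL2 t).1)
  refine (hasDerivAt_integral_add_mul hbase (hprev.sub hcur) 0).congr_of_eventuallyEq
    (.of_forall fun ε => integral_congr_ae (ae_of_all _ fun ω => ?_))
  exact dynamicMoment_update_add_mul M _ (hastar0 _ _) ht₀ fstar ftil ε (S · ω) τ (T · ω)

/-- Neyman orthogonality with respect to the regressions: the Gateaux derivative of
`f_t ↦ E[m(Z; f̄, ā)]` in a square-integrable direction `f̃_t`, evaluated at the true nuisances,
equals `E[a*_{t-1}(S_{t-1},T_{t-1}) f̃_t(S_t,τ_t) - a*_t(S_t,T_t) f̃_t(S_t,T_t)]`,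
and this quantity is zero. -/
theorem dynamic_orthogonality_regressions {Ω 𝒮 𝒯 : Type*} [MeasurableSpace Ω]
    [MeasurableSpace 𝒮] [MeasurableSpace 𝒯]
    (μ : Measure Ω) [IsProbabilityMeasure μ]
    (M : ℕ) (hM : 1 ≤ M)
    (S : ℕ → Ω → 𝒮) (T : ℕ → Ω → 𝒯) (Y : Ω → ℝ) (τ : ℕ → 𝒯)
    (hSmeas : ∀ t, Measurable (S t)) (hTmeas : ∀ t, Measurable (T t))
    (fstar astar : ℕ → 𝒮 → 𝒯 → ℝ)
    (hfstarY : ∀ ω, fstar (M + 1) (S (M + 1) ω) (τ (M + 1)) = Y ω)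
    (hastar0 : ∀ s u, astar 0 s u = 1)
    -- the true nested regressions
    (hreg : ∀ t ∈ Icc 1 M,
      (fun ω => fstar t (S t ω) (T t ω)) =ᵐ[μ]
        μ[(fun ω => fstar (t + 1) (S (t + 1) ω) (τ (t + 1))) |
          MeasurableSpace.comap (fun ω => (S t ω, T t ω)) inferInstance])
    -- the true recursive Riesz representers
    (hriesz : ∀ t ∈ Icc 1 M, ∀ g : 𝒮 → 𝒯 → ℝ,
      MemLp (fun ω => g (S t ω) (T t ω)) 2 μ →
      MemLp (fun ω => g (S t ω) (τ t)) 2 μ →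
      (∫ ω, astar (t - 1) (S (t - 1) ω) (T (t - 1) ω) * g (S t ω) (τ t) ∂μ)
        = ∫ ω, astar t (S t ω) (T t ω) * g (S t ω) (T t ω) ∂μ)
    (hfstarL2 : ∀ t, MemLp (fun ω => fstar t (S t ω) (T t ω)) 2 μ
      ∧ MemLp (fun ω => fstar t (S t ω) (τ t)) 2 μ)
    (hastarL2 : ∀ t, MemLp (fun ω => astar t (S t ω) (T t ω)) 2 μ)
    (t₀ : ℕ) (ht₀ : t₀ ∈ Icc 1 M)
    (ftil : 𝒮 → 𝒯 → ℝ)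
    (hftilL2 : MemLp (fun ω => ftil (S t₀ ω) (T t₀ ω)) 2 μ)
    (hftilτL2 : MemLp (fun ω => ftil (S t₀ ω) (τ t₀)) 2 μ) :
    HasDerivAt
      (fun ε : ℝ =>
        ∫ ω,
          ((Function.update fstar t₀ (fun s u => fstar t₀ s u + ε * ftil s u)) 1 (S 1 ω) (τ 1)
            + ∑ t ∈ Icc 1 M, astar t (S t ω) (T t ω)
                * ((Function.update fstar t₀ (fun s u => fstar t₀ s u + ε * ftil s u))
                      (t + 1) (S (t + 1) ω) (τ (t + 1))
                   - (Function.update fstar t₀ (fun s u => fstar t₀ s u + ε * ftil s u))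
                      t (S t ω) (T t ω))) ∂μ)
      (∫ ω, astar (t₀ - 1) (S (t₀ - 1) ω) (T (t₀ - 1) ω) * ftil (S t₀ ω) (τ t₀)
          - astar t₀ (S t₀ ω) (T t₀ ω) * ftil (S t₀ ω) (T t₀ ω) ∂μ)
      0
    ∧ (∫ ω, astar (t₀ - 1) (S (t₀ - 1) ω) (T (t₀ - 1) ω) * ftil (S t₀ ω) (τ t₀)
          - astar t₀ (S t₀ ω) (T t₀ ω) * ftil (S t₀ ω) (T t₀ ω) ∂μ) = 0 :=
  dynamic_orthogonality_regressions_general μ M S T τ fstar astar hastar0 hriesz hfstarL2 hastarL2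
    t₀ ht₀ ftil hftilL2 hftilτL2
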